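/- Let the data matrices X_0, X, U be generated by the system and satisfy the persistency of excitation assumption rank([X_0; U]) = mT + n. Fix λ ∈ ℝ and define the allowable eigenvector subspace from data as P_λ = X_0 K_U [I 0] Ker([X K_U − W Λ_λ X_0 K_U, X K_0]), i.e., P_λ = { X_0 K_U α : there exists β with X K_U α + X K_0 β = W Λ_λ X_0 K_U α }. Then a vector v ∈ ℝ^n belongs to P_λ if and only if there exists an input sequence u(0),…,u(T−1) such that the trajectory of the system with x(0) = v satisfies x(t) = λ^t v for all t = 1,…,T. -/

import Mathlib

open Matrix

/-- The full state sequence over times `0, 1, …, T` built from the initial state `x0` and the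
subsequent states `x 0 = x(1), …, x (T-1) = x(T)`. -/
def stateSeq {n T : ℕ} (x0 : Fin n → ℝ) (x : Fin T → Fin n → ℝ) : Fin (T + 1) → Fin n → ℝ :=
  Fin.cases x0 x

/-- `(x0, u, x)` is a trajectory of the system `x(t+1) = A x(t) + B u(t)`. -/
def IsTrajectory {n m T : ℕ} (A : Matrix (Fin n) (Fin n) ℝ) (B : Matrix (Fin n) (Fin m) ℝ)
    (x0 : Fin n → ℝ) (u : Fin T → Fin m → ℝ) (x : Fin T → Fin n → ℝ) : Prop :=
  ∀ t : Fin T, x t = A.mulVec (stateSeq x0 x t.castSucc) + B.mulVec (u t)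

/-- The data matrices are generated by `N` experiments of length `T` on the system. -/
def DataGenerated {n m T N : ℕ} (A : Matrix (Fin n) (Fin n) ℝ) (B : Matrix (Fin n) (Fin m) ℝ)
    (X0 : Matrix (Fin n) (Fin N) ℝ) (X : Matrix (Fin T × Fin n) (Fin N) ℝ)
    (U : Matrix (Fin T × Fin m) (Fin N) ℝ) : Prop :=
  ∀ i : Fin N, IsTrajectory A B (fun j => X0 j i) (fun t j => U (t, j) i) (fun t j => X (t, j) i)

/-- The columns of `Kb` form a basis of `Ker M`. -/
def IsKerBasis {α β γ : Type*} [Fintype β] [Fintype γ]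
    (M : Matrix α β ℝ) (Kb : Matrix β γ ℝ) : Prop :=
  Function.Injective Kb.mulVecLin ∧ LinearMap.range Kb.mulVecLin = LinearMap.ker M.mulVecLin

/-- `Λ_λ = [I; λI; λ²I; …; λ^T I] ∈ ℝ^{n(T+1) × n}`. -/
def LamMat (T n : ℕ) (lam : ℝ) : Matrix (Fin (T + 1) × Fin n) (Fin n) ℝ :=
  Matrix.of fun p q => lam ^ (p.1 : ℕ) * (if p.2 = q then 1 else 0)

/-- `W = [0_{nT×n}  I_{nT}]`, the matrix extracting the last `nT` rows of `Λ_λ`. -/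
def Wmat (T n : ℕ) : Matrix (Fin T × Fin n) (Fin (T + 1) × Fin n) ℝ :=
  Matrix.of fun p q => if q.1 = p.1.succ ∧ q.2 = p.2 then 1 else 0

/-- The state trajectory of `x(t+1) = A x(t) + B u(t)` from initial state `x0` with input `u`. -/
def trajFrom {n m : ℕ} (A : Matrix (Fin n) (Fin n) ℝ) (B : Matrix (Fin n) (Fin m) ℝ)
    (x0 : Fin n → ℝ) (u : ℕ → Fin m → ℝ) : ℕ → Fin n → ℝ
  | 0 => x0
  | t + 1 => A.mulVec (trajFrom A B x0 u t) + B.mulVec (u t)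

/-!
Trajectories of `x(t+1) = A x(t) + B u(t)` over a horizon `T` form a linear subspace, and the
state sequence is determined by the initial state and the inputs. Hence every combination
`ξ` of the experiments is again a trajectory, with initial state `X₀ ξ`, inputs `U ξ` and
states `X ξ`, and by persistency of excitation every initial state and input sequence arises
this way. So `v` is an admissible eigenvector iff some `ξ` has `X₀ ξ = v` and `X ξ = W Λ_λ v`.
Splitting such a `ξ` along `Ker U` and `Ker X₀` (again possible by persistency of excitation)
gives the description of `P_λ` through `K_U` and `K₀`.
-/

section Trajectory

variable {n m T : ℕ} (A : Matrix (Fin n) (Fin n) ℝ) (B : Matrix (Fin n) (Fin m) ℝ)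

lemma stateSeq_sum {ι : Type*} (s : Finset ι) (c : ι → ℝ) (x0 : ι → Fin n → ℝ)
    (x : ι → Fin T → Fin n → ℝ) :
    stateSeq (∑ i ∈ s, c i • x0 i) (∑ i ∈ s, c i • x i) =
      ∑ i ∈ s, c i • stateSeq (x0 i) (x i) := by
  funext t
  cases t using Fin.cases <;> simp [stateSeq]

lemma IsTrajectory.sum {ι : Type*} {s : Finset ι} {x0 : ι → Fin n → ℝ}
    {u : ι → Fin T → Fin m → ℝ} {x : ι → Fin T → Fin n → ℝ}
    (h : ∀ i ∈ s, IsTrajectory A B (x0 i) (u i) (x i)) (c : ι → ℝ) :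
    IsTrajectory A B (∑ i ∈ s, c i • x0 i) (∑ i ∈ s, c i • u i) (∑ i ∈ s, c i • x i) := by
  intro t
  rw [stateSeq_sum, Finset.sum_apply, Finset.sum_apply, Finset.sum_apply, mulVec_sum,
    mulVec_sum, ← Finset.sum_add_distrib]
  refine Finset.sum_congr rfl fun i hi => ?_
  simp only [Pi.smul_apply, mulVec_smul, h i hi t, smul_add]

lemma IsTrajectory.unique {x0 : Fin n → ℝ} {u : Fin T → Fin m → ℝ} {x x' : Fin T → Fin n → ℝ}
    (h : IsTrajectory A B x0 u x) (h' : IsTrajectory A B x0 u x') : x = x' := by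
  have hseq : stateSeq x0 x = stateSeq x0 x' := by
    funext s
    induction s using Fin.induction with
    | zero => rfl
    | succ t ih => change x t = x' t; rw [h t, h' t, ih]
  funext t
  simpa [stateSeq] using congrFun hseq t.succ

lemma stateSeq_trajFrom (x0 : Fin n → ℝ) (u : ℕ → Fin m → ℝ) (t : Fin (T + 1)) :
    stateSeq x0 (fun s : Fin T => trajFrom A B x0 u (s + 1)) t = trajFrom A B x0 u t := by
  cases t using Fin.cases <;> rfl

lemma isTrajectory_trajFrom (x0 : Fin n → ℝ) (u : ℕ → Fin m → ℝ) :
    IsTrajectory A B x0 (fun t : Fin T => u t) (fun t => trajFrom A B x0 u (t + 1)) := by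
  intro t
  rw [stateSeq_trajFrom]
  rfl

lemma IsTrajectory.exists_trajFrom_eq {x0 : Fin n → ℝ} {w : Fin T → Fin m → ℝ}
    {x : Fin T → Fin n → ℝ} (h : IsTrajectory A B x0 w x) :
    ∃ u : ℕ → Fin m → ℝ, ∀ t : Fin T, trajFrom A B x0 u (t + 1) = x t := by
  refine ⟨fun s => if hs : s < T then w ⟨s, hs⟩ else 0, fun t => ?_⟩
  have hw : (fun t : Fin T => if hs : (t : ℕ) < T then w ⟨t, hs⟩ else 0) = w :=
    funext fun t => dif_pos t.isLt
  have := isTrajectory_trajFrom (T := T) A B x0 (fun s => if hs : s < T then w ⟨s, hs⟩ else 0)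
  rw [hw] at this
  exact congrFun (this.unique A B h) t

end Trajectory

lemma DataGenerated.isTrajectory_mulVec {n m T N : ℕ} {A : Matrix (Fin n) (Fin n) ℝ}
    {B : Matrix (Fin n) (Fin m) ℝ} {X0 : Matrix (Fin n) (Fin N) ℝ}
    {X : Matrix (Fin T × Fin n) (Fin N) ℝ} {U : Matrix (Fin T × Fin m) (Fin N) ℝ}
    (hdata : DataGenerated A B X0 X U) (ξ : Fin N → ℝ) :
    IsTrajectory A B (X0 *ᵥ ξ) (fun t l => (U *ᵥ ξ) (t, l)) (fun t j => (X *ᵥ ξ) (t, j)) := by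
  convert IsTrajectory.sum A B (fun i _ => hdata i) ξ (s := Finset.univ) using 1 <;>
    ext <;> simp [mulVec, dotProduct, Finset.sum_apply, mul_comm]

lemma Wmat_mul_LamMat_mulVec (T n : ℕ) (lam : ℝ) (v : Fin n → ℝ) (t : Fin T) (j : Fin n) :
    ((Wmat T n * LamMat T n lam) *ᵥ v) (t, j) = lam ^ ((t : ℕ) + 1) * v j := by
  simp [mulVec, dotProduct, mul_apply, Wmat, LamMat, Fintype.sum_prod_type, ite_and]

lemma Matrix.exists_mulVec_eq_of_rank_fromRows {ι κ₁ κ₂ : Type*} [Fintype ι] [Fintype κ₁]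
    [Fintype κ₂] {K : Type*} [Field K] (A₁ : Matrix κ₁ ι K) (A₂ : Matrix κ₂ ι K)
    (h : (fromRows A₁ A₂).rank = Fintype.card κ₁ + Fintype.card κ₂) (a : κ₁ → K) (b : κ₂ → K) :
    ∃ ξ, A₁ *ᵥ ξ = a ∧ A₂ *ᵥ ξ = b := by
  have hsurj : Function.Surjective (fromRows A₁ A₂).mulVecLin := by
    rw [← LinearMap.range_eq_top]
    apply Submodule.eq_top_of_finrank_eq
    rw [← rank, h, Module.finrank_fintype_fun_eq_card, Fintype.card_sum]
  obtain ⟨ξ, hξ⟩ := hsurj (Sum.elim a b)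
  rw [mulVecLin_apply, fromRows_mulVec] at hξ
  exact ⟨ξ, funext fun i => congrFun hξ (.inl i), funext fun i => congrFun hξ (.inr i)⟩

lemma IsKerBasis.mulVec_mulVec_eq_zero {α β γ : Type*} [Fintype β] [Fintype γ] {M : Matrix α β ℝ}
    {Kb : Matrix β γ ℝ} (h : IsKerBasis M Kb) (a : γ → ℝ) : M *ᵥ (Kb *ᵥ a) = 0 := by
  have : Kb *ᵥ a ∈ LinearMap.ker M.mulVecLin := h.2 ▸ ⟨a, rfl⟩
  simpa using this

lemma IsKerBasis.exists_mulVec_eq {α β γ : Type*} [Fintype β] [Fintype γ] {M : Matrix α β ℝ}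
    {Kb : Matrix β γ ℝ} (h : IsKerBasis M Kb) {ξ : β → ℝ} (hξ : M *ᵥ ξ = 0) :
    ∃ a, Kb *ᵥ a = ξ :=
  (h.2.symm ▸ LinearMap.mem_ker.2 hξ : ξ ∈ LinearMap.range Kb.mulVecLin)

lemma exists_kerBasis_iff_exists {ι κ ρ σ π τ : Type*} [Fintype ι] [Fintype κ] [Fintype ρ]
    [Fintype π] [Fintype τ] {X0 : Matrix κ ι ℝ} {U : Matrix ρ ι ℝ} {KU : Matrix ι π ℝ}
    {K0 : Matrix ι τ ℝ} (hKU : IsKerBasis U KU) (hK0 : IsKerBasis X0 K0)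
    (hsurj : ∀ a b, ∃ ξ, X0 *ᵥ ξ = a ∧ U *ᵥ ξ = b) (Y : Matrix σ ι ℝ) (M : Matrix σ κ ℝ)
    (v : κ → ℝ) :
    (∃ α β, X0 *ᵥ (KU *ᵥ α) = v ∧ Y *ᵥ (KU *ᵥ α) + Y *ᵥ (K0 *ᵥ β) = M *ᵥ (X0 *ᵥ (KU *ᵥ α))) ↔
      ∃ ξ, X0 *ᵥ ξ = v ∧ Y *ᵥ ξ = M *ᵥ v := by
  constructor
  · rintro ⟨α, β, hv, hY⟩
    refine ⟨KU *ᵥ α + K0 *ᵥ β, ?_, ?_⟩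
    · rw [mulVec_add, hK0.mulVec_mulVec_eq_zero, add_zero, hv]
    · rw [mulVec_add, hY, hv]
  · rintro ⟨ξ, hv, hY⟩
    obtain ⟨ξ₀, hξ₀v, hξ₀U⟩ := hsurj v 0
    obtain ⟨α, hα⟩ := hKU.exists_mulVec_eq hξ₀U
    obtain ⟨β, hβ⟩ := hK0.exists_mulVec_eq (ξ := ξ - ξ₀) (by rw [mulVec_sub, hv, hξ₀v, sub_self])
    refine ⟨α, β, hα ▸ hξ₀v, ?_⟩
    rw [hα, hβ, hξ₀v, ← mulVec_add, add_sub_cancel, hY]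

/-- Under persistency of excitation, a vector `v` belongs to the data-driven
allowable eigenvector subspace
`P_λ = { X₀ K_U α : ∃ β, X K_U α + X K₀ β = W Λ_λ X₀ K_U α }`
if and only if there exists an input sequence `u(0), …, u(T-1)` such that the trajectory of the
system with `x(0) = v` satisfies `x(t) = λ^t v` for all `t = 1, …, T`. -/
theorem stmt5 {n m T N p q : ℕ}
    (A : Matrix (Fin n) (Fin n) ℝ) (B : Matrix (Fin n) (Fin m) ℝ)
    (X0 : Matrix (Fin n) (Fin N) ℝ) (X : Matrix (Fin T × Fin n) (Fin N) ℝ)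
    (U : Matrix (Fin T × Fin m) (Fin N) ℝ)
    (hdata : DataGenerated A B X0 X U)
    (KU : Matrix (Fin N) (Fin p) ℝ) (K0 : Matrix (Fin N) (Fin q) ℝ)
    (hKU : IsKerBasis U KU) (hK0 : IsKerBasis X0 K0)
    (hPE : (Matrix.fromRows X0 U).rank = m * T + n)
    (lam : ℝ) (v : Fin n → ℝ) :
    (∃ (α : Fin p → ℝ) (β : Fin q → ℝ),
        X0.mulVec (KU.mulVec α) = v ∧
        X.mulVec (KU.mulVec α) + X.mulVec (K0.mulVec β) =
          (Wmat T n * LamMat T n lam).mulVec (X0.mulVec (KU.mulVec α))) ↔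
      (∃ u : ℕ → Fin m → ℝ, ∀ t : Fin T, ∀ j : Fin n,
        trajFrom A B v u ((t : ℕ) + 1) j = lam ^ ((t : ℕ) + 1) * v j) := by
  have hsurj := exists_mulVec_eq_of_rank_fromRows X0 U (by simpa [mul_comm, add_comm] using hPE)
  rw [exists_kerBasis_iff_exists hKU hK0 hsurj]
  constructor
  · rintro ⟨ξ, hv, hX⟩
    obtain ⟨u, hu⟩ := (hdata.isTrajectory_mulVec ξ).exists_trajFrom_eq
    refine ⟨u, fun t j => ?_⟩
    rw [← hv, hu, hX, hv]
    exact Wmat_mul_LamMat_mulVec T n lam v t j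
  · rintro ⟨u, hu⟩
    obtain ⟨ξ, hv, hU⟩ := hsurj v fun p => u p.1 p.2
    have htraj := (isTrajectory_trajFrom (T := T) A B v u).unique A B
      (by simpa [hv, hU] using hdata.isTrajectory_mulVec ξ)
    refine ⟨ξ, hv, funext fun ⟨t, j⟩ => ?_⟩
    rw [Wmat_mul_LamMat_mulVec, ← hu t j]
    exact congrFun (congrFun htraj t) j |>.symm
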